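/- arXiv:2511.11067 — 4 statements merged into one kernel-verified Lean document; each statement's English description precedes it below -/
import Mathlib

section
/- Let M be a separable metric space. There exists a countable set D of bounded Lipschitz real-valued functions on M such that for any probability measures P, P_1, P_2, ... on the Borel σ-field of M, if ∫ g dP_n → ∫ g dP for all g ∈ D, then P_n converges weakly to P. -/
/-!
For an open set `U` the Lipschitz cut-offs `min 1 (k · d(x, Uᶜ))` increase to the indicator of `U`,
so convergence of their integrals along `Pₙ` gives `P U ≤ liminf Pₙ U` by monotone convergence.
Every open set is approximated in measure from inside by finite unions of sets of a countable
basis, so it suffices to take the cut-offs of these countably many finite unions; the liminf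
inequality for all open sets is the portmanteau criterion for weak convergence.
-/

open MeasureTheory Filter Topology

namespace Metric

variable {M : Type*} [PseudoMetricSpace M]

noncomputable def openCutoff (U : Set M) (k : ℕ) (x : M) : ℝ :=
  min 1 (k * infDist x Uᶜ)

section Cutoff

variable (U : Set M) (k : ℕ)

theorem lipschitzWith_openCutoff : LipschitzWith k (openCutoff U k) := by
  have := (lipschitzWith_smul (k : ℝ)).comp (lipschitz_infDist_pt Uᶜ)
  simp only [mul_one, Real.nnnorm_natCast] at this
  exact this.const_min 1

theorem openCutoff_nonneg (x : M) : 0 ≤ openCutoff U k x :=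
  le_min zero_le_one (mul_nonneg k.cast_nonneg infDist_nonneg)

theorem openCutoff_le_one (x : M) : openCutoff U k x ≤ 1 := min_le_left _ _

theorem abs_openCutoff_le_one (x : M) : |openCutoff U k x| ≤ 1 := by
  rw [abs_of_nonneg (openCutoff_nonneg U k x)]
  exact openCutoff_le_one U k x

theorem openCutoff_le_indicator : openCutoff U k ≤ U.indicator 1 := by
  intro x
  by_cases hx : x ∈ U
  · simpa [hx] using openCutoff_le_one U k x
  · simp [openCutoff, hx, infDist_zero_of_mem (Set.mem_compl hx)]

theorem monotone_openCutoff (x : M) : Monotone (openCutoff U · x) := fun _ _ hkl =>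
  min_le_min le_rfl (mul_le_mul_of_nonneg_right (by exact_mod_cast hkl) infDist_nonneg)

end Cutoff

theorem tendsto_openCutoff {U : Set M} (hU : IsOpen U) (hUc : Uᶜ.Nonempty) (x : M) :
    Tendsto (openCutoff U · x) atTop (𝓝 (U.indicator 1 x)) := by
  by_cases hx : x ∈ U
  · have hpos : 0 < infDist x Uᶜ :=
      (hU.isClosed_compl.notMem_iff_infDist_pos hUc).mp (not_not_intro hx)
    have hlarge : ∀ᶠ k : ℕ in atTop, 1 ≤ k * infDist x Uᶜ :=
      (tendsto_natCast_atTop_atTop.atTop_mul_const hpos).eventually_ge_atTop 1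
    refine tendsto_const_nhds.congr' ?_
    filter_upwards [hlarge] with k hk
    simp [openCutoff, hx, min_eq_left hk]
  · simp [openCutoff, hx, infDist_zero_of_mem (Set.mem_compl hx)]

section Integral

variable [MeasurableSpace M] [OpensMeasurableSpace M] {U : Set M}

theorem integrable_openCutoff (U : Set M) (k : ℕ) (μ : Measure M) [IsFiniteMeasure μ] :
    Integrable (openCutoff U k) μ :=
  (integrable_const (1 : ℝ)).mono' (lipschitzWith_openCutoff U k).continuous.aestronglyMeasurable
    (ae_of_all _ (abs_openCutoff_le_one U k))

theorem integral_openCutoff_le (hU : MeasurableSet U) (k : ℕ) (μ : Measure M)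
    [IsFiniteMeasure μ] :
    ∫ x, openCutoff U k x ∂μ ≤ μ.real U := by
  rw [← integral_indicator_one hU]
  exact integral_mono (integrable_openCutoff U k μ) ((integrable_const 1).indicator hU)
    (openCutoff_le_indicator U k)

theorem tendsto_integral_openCutoff (hU : IsOpen U) (hUc : Uᶜ.Nonempty) (μ : Measure M)
    [IsFiniteMeasure μ] :
    Tendsto (fun k => ∫ x, openCutoff U k x ∂μ) atTop (𝓝 (μ.real U)) := by
  rw [← integral_indicator_one hU.measurableSet]
  exact integral_tendsto_of_tendsto_of_monotone (fun k => integrable_openCutoff U k μ)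
    ((integrable_const 1).indicator hU.measurableSet)
    (ae_of_all _ (monotone_openCutoff U)) (ae_of_all _ (tendsto_openCutoff hU hUc))

theorem le_liminf_measure_of_tendsto_integral_openCutoff {ι : Type*} {L : Filter ι} [L.NeBot]
    (hU : IsOpen U) (μ : Measure M) [IsProbabilityMeasure μ] (μs : ι → Measure M)
    [∀ i, IsProbabilityMeasure (μs i)]
    (h : ∀ k, Tendsto (fun i => ∫ x, openCutoff U k x ∂(μs i)) L (𝓝 (∫ x, openCutoff U k x ∂μ))) :
    μ U ≤ L.liminf (fun i => μs i U) := by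
  -- For `U = univ` the cut-offs vanish (`infDist x ∅ = 0`), but then both sides are `1`.
  rcases Set.eq_empty_or_nonempty Uᶜ with hUc | hUc
  · simp [Set.compl_empty_iff.mp hUc]
  have hlim : Tendsto (fun k => ENNReal.ofReal (∫ x, openCutoff U k x ∂μ)) atTop (𝓝 (μ U)) := by
    simpa using ENNReal.tendsto_ofReal (tendsto_integral_openCutoff hU hUc μ)
  refine le_of_tendsto' hlim fun k => ?_
  rw [← (ENNReal.tendsto_ofReal (h k)).liminf_eq]
  exact liminf_le_liminf (Eventually.of_forall fun i =>
    ENNReal.ofReal_le_of_le_toReal (integral_openCutoff_le hU.measurableSet k (μs i)))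

end Integral

end Metric

theorem TopologicalSpace.IsTopologicalBasis.le_liminf_measure_of_le_liminf_measure_sUnion
    {Ω ι : Type*} [TopologicalSpace Ω] [SecondCountableTopology Ω] [MeasurableSpace Ω]
    {B : Set (Set Ω)} (hB : IsTopologicalBasis B) {L : Filter ι}
    (μ : Measure Ω) [IsProbabilityMeasure μ] (μs : ι → Measure Ω)
    (h : ∀ T ⊆ B, T.Finite → μ (⋃₀ T) ≤ L.liminf (fun i => μs i (⋃₀ T)))
    {G : Set Ω} (hG : IsOpen G) :
    μ G ≤ L.liminf (fun i => μs i G) := by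
  have hB_nhds : ∀ u, IsOpen u → ∀ x ∈ u, ∃ s ∈ B, s ∈ 𝓝 x ∧ s ⊆ u := fun u hu x hx => by
    obtain ⟨s, hsB, hxs, hsu⟩ := hB.exists_subset_of_mem_open hx hu
    exact ⟨s, hsB, (hB.isOpen hsB).mem_nhds hxs, hsu⟩
  let ν : ProbabilityMeasure Ω := ⟨μ, inferInstance⟩
  refine le_of_forall_lt fun r hr => ?_
  lift r to NNReal using ne_top_of_lt hr
  obtain ⟨T, hTB, hrT, hTG⟩ := ν.exists_lt_measure_biUnion_of_isOpen hB_nhds hG (r := r)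
    (by rw [← ENNReal.coe_lt_coe, ProbabilityMeasure.ennreal_coeFn_eq_coeFn_toMeasure]; exact hr)
  have hT : ⋃₀ (T : Set (Set Ω)) = ⋃ t ∈ T, t := by simp [Set.sUnion_eq_biUnion]
  rw [← hT, ← ENNReal.coe_lt_coe, ProbabilityMeasure.ennreal_coeFn_eq_coeFn_toMeasure] at hrT
  rw [← hT] at hTG
  calc (r : ENNReal) < μ (⋃₀ ↑T) := hrT
    _ ≤ L.liminf (fun i => μs i (⋃₀ ↑T)) := h T hTB T.finite_toSet
    _ ≤ L.liminf (fun i => μs i G) :=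
        liminf_le_liminf (Eventually.of_forall fun i => measure_mono hTG)

/-- On a separable metric space there is a countable family `D` of bounded
Lipschitz functions such that convergence of integrals along `D` implies weak convergence
of probability measures (i.e. convergence of integrals of all bounded continuous functions). -/
theorem exists_countable_lipschitz_family_weak_convergence
    {M : Type*} [MetricSpace M] [TopologicalSpace.SeparableSpace M]
    [MeasurableSpace M] [BorelSpace M] :
    ∃ D : Set (M → ℝ), D.Countable ∧
      (∀ g ∈ D, (∃ K : NNReal, LipschitzWith K g) ∧ (∃ C : ℝ, ∀ x, |g x| ≤ C)) ∧
      (∀ (P : Measure M) (Pn : ℕ → Measure M),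
        IsProbabilityMeasure P → (∀ n, IsProbabilityMeasure (Pn n)) →
        (∀ g ∈ D, Tendsto (fun n => ∫ x, g x ∂(Pn n)) atTop (𝓝 (∫ x, g x ∂P))) →
        ∀ f : BoundedContinuousFunction M ℝ,
          Tendsto (fun n => ∫ x, f x ∂(Pn n)) atTop (𝓝 (∫ x, f x ∂P))) := by
  obtain ⟨B, hB_countable, -, hB⟩ := TopologicalSpace.exists_countable_basis M
  refine ⟨Set.image2 (fun T k => Metric.openCutoff (⋃₀ T) k) {T | T.Finite ∧ T ⊆ B} Set.univ,
    (Set.countable_ofPred_finite_subset hB_countable).image2 Set.countable_univ _, ?_, ?_⟩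
  · rintro _ ⟨T, -, k, -, rfl⟩
    exact ⟨⟨k, Metric.lipschitzWith_openCutoff _ k⟩, ⟨1, Metric.abs_openCutoff_le_one _ k⟩⟩
  · intro P Pn _ _ hD
    refine BoundedContinuousFunction.tendsto_integral_of_forall_integral_le_liminf_integral
      fun f hf => integral_le_liminf_integral_of_forall_isOpen_measure_le_liminf_measure hf
        fun G hG => hB.le_liminf_measure_of_le_liminf_measure_sUnion P Pn (fun T hTB hT => ?_) hG
    have hT_open : IsOpen (⋃₀ T) := isOpen_sUnion fun t ht => hB.isOpen (hTB ht)
    exact Metric.le_liminf_measure_of_tendsto_integral_openCutoff hT_open P Pn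
      fun k => hD _ ⟨T, ⟨hT, hTB⟩, k, trivial, rfl⟩
end

section
/- Let (E, d) be a metric space, P a probability measure on E, H a metric space, η ∈ H, and m : H × E → [-∞, ∞) a measurable function such that for P-almost every z, the map η' ↦ m(η', z) is upper semicontinuous at η. Write m_B(z) = sup_{η' ∈ B} m(η', z). If ∫ m_{B̄(η,δ₀)} dP < ∞ for some δ₀ > 0 (where B̄(η,δ₀) is the closed ball of radius δ₀), then lim_{δ ↓ 0} ∫ m_{B(η,δ)} dP = ∫ m_η dP, where B(η,δ) is the open ball of radius δ. -/
open MeasureTheory Filter Topology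

/-- The upper part of an extended-real number, as an `ℝ≥0∞`. -/
noncomputable def erealPosPart (x : EReal) : ENNReal :=
  if x = ⊤ then ⊤ else ENNReal.ofReal x.toReal

/-- Extended-real integral `∫ f⁺ − ∫ f⁻` (values in `EReal`). -/
noncomputable def erealIntegral {E : Type*} [MeasurableSpace E]
    (P : Measure E) (f : E → EReal) : EReal :=
  ((∫⁻ z, erealPosPart (f z) ∂P : ENNReal) : EReal)
    - ((∫⁻ z, erealPosPart (-(f z)) ∂P : ENNReal) : EReal)

/-! The suprema `m_{B(η,δ)}` decrease as `δ ↓ 0` and, by upper semicontinuity, tend to `m_η`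
almost everywhere. Along a sequence `δₙ ↓ 0` their positive parts decrease and are dominated by
that of the closed-ball supremum, so monotone convergence applies; their negative parts increase,
so it applies there too. Since `δ ↦ ∫ m_{B(η,δ)}` is monotone and bounded below by `∫ m_η`, the
limit along one sequence is the limit as `δ ↓ 0`. -/

open Set Metric

lemma monotone_erealPosPart : Monotone erealPosPart := fun _ _ => EReal.toENNReal_le_toENNReal

lemma continuous_erealPosPart : Continuous erealPosPart := EReal.continuous_toENNReal

lemma EReal.tendsto_coe_ennreal_sub {ι : Type*} {l : Filter ι} {a b : ι → ENNReal}
    {A B : ENNReal} (ha : Tendsto a l (𝓝 A)) (hb : Tendsto b l (𝓝 B)) (hA : A ≠ ⊤) :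
    Tendsto (fun i => (a i : EReal) - b i) l (𝓝 ((A : EReal) - B)) := by
  have hadd : ContinuousAt (fun p : EReal × EReal => p.1 + p.2) (A, -B) :=
    EReal.continuousAt_add (Or.inl (by simpa using hA)) (Or.inl (EReal.coe_ennreal_ne_bot A))
  exact hadd.tendsto.comp ((continuous_coe_ennreal_ereal.tendsto A).comp ha |>.prodMk_nhds
    ((continuous_coe_ennreal_ereal.tendsto B).comp hb).neg)

section erealIntegral

variable {E : Type*} [MeasurableSpace E] {P : Measure E}

lemma monotone_erealIntegral : Monotone (erealIntegral P) := fun _ _ hfg =>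
  EReal.sub_le_sub
    (EReal.coe_ennreal_le_coe_ennreal_iff.2 (lintegral_mono fun z => monotone_erealPosPart (hfg z)))
    (EReal.coe_ennreal_le_coe_ennreal_iff.2
      (lintegral_mono fun z => monotone_erealPosPart (EReal.neg_le_neg_iff.2 (hfg z))))

lemma erealIntegral_eq_bot {f : E → EReal} (hf : ∫⁻ z, erealPosPart (-f z) ∂P = ⊤) :
    erealIntegral P f = ⊥ := by
  rw [erealIntegral, hf, EReal.coe_ennreal_top, EReal.sub_top]

lemma lintegral_erealPosPart_ne_top {f : E → EReal} (hf : erealIntegral P f < ⊤)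
    (hf' : ∫⁻ z, erealPosPart (-f z) ∂P ≠ ⊤) : ∫⁻ z, erealPosPart (f z) ∂P ≠ ⊤ := by
  intro htop
  rw [erealIntegral, htop, EReal.coe_ennreal_top, EReal.top_sub (by simpa using hf')] at hf
  exact hf.ne rfl

theorem tendsto_erealIntegral_of_antitone {f : ℕ → E → EReal} {g : E → EReal}
    (hf : ∀ n, Measurable (f n)) (hf_anti : Antitone f)
    (h_lim : ∀ᵐ z ∂P, Tendsto (fun n => f n z) atTop (𝓝 (g z)))
    (h0 : erealIntegral P (f 0) < ⊤) :
    Tendsto (fun n => erealIntegral P (f n)) atTop (𝓝 (erealIntegral P g)) := by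
  have hg_le : ∀ᵐ z ∂P, g z ≤ f 0 z := h_lim.mono fun z hz =>
    Antitone.le_of_tendsto (f := fun n => f n z) (fun _ _ h => hf_anti h z) hz 0
  -- `h0` leaves two cases: `∫ (f 0)⁻ = ∞`, where every integral is `⊥`, or `∫ (f 0)⁺ < ∞`.
  by_cases hneg : ∫⁻ z, erealPosPart (-f 0 z) ∂P = ⊤
  · have hn : ∀ n, erealIntegral P (f n) = ⊥ := fun n => erealIntegral_eq_bot <|
      top_le_iff.1 <| hneg ▸ lintegral_mono fun z =>
        monotone_erealPosPart (EReal.neg_le_neg_iff.2 (hf_anti n.zero_le z))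
    have hg : erealIntegral P g = ⊥ := erealIntegral_eq_bot <| top_le_iff.1 <| hneg ▸
      lintegral_mono_ae (hg_le.mono fun z hz => monotone_erealPosPart (EReal.neg_le_neg_iff.2 hz))
    simp only [hn, hg, tendsto_const_nhds]
  · have hpos := lintegral_erealPosPart_ne_top h0 hneg
    have hmeas : ∀ n, Measurable fun z => erealPosPart (f n z) := fun n =>
      continuous_erealPosPart.measurable.comp (hf n)
    have hmeas_neg : ∀ n, Measurable fun z => erealPosPart (-f n z) := fun n =>
      continuous_erealPosPart.measurable.comp (hf n).neg
    refine EReal.tendsto_coe_ennreal_sub ?_ ?_ ?_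
    · exact lintegral_tendsto_of_tendsto_of_antitone (fun n => (hmeas n).aemeasurable)
        (ae_of_all _ fun z _ _ h => monotone_erealPosPart (hf_anti h z)) hpos
        (h_lim.mono fun z hz => (continuous_erealPosPart.tendsto _).comp hz)
    · exact lintegral_tendsto_of_tendsto_of_monotone (fun n => (hmeas_neg n).aemeasurable)
        (ae_of_all _ fun z _ _ h => monotone_erealPosPart (EReal.neg_le_neg_iff.2 (hf_anti h z)))
        (h_lim.mono fun z hz => (continuous_erealPosPart.tendsto _).comp hz.neg)
    · exact ne_top_of_le_ne_top hpos
        (lintegral_mono_ae (hg_le.mono fun z hz => monotone_erealPosPart hz))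

end erealIntegral

lemma Monotone.tendsto_nhdsGT_of_tendsto_comp {α β : Type*} [LinearOrder α] [TopologicalSpace α]
    [OrderTopology α] [CompleteLinearOrder β] [TopologicalSpace β] [OrderTopology β]
    {f : α → β} (hf : Monotone f) {x : α} {L : β} (hL : ∀ y, x < y → L ≤ f y)
    {u : ℕ → α} (hu : ∀ n, x < u n) (hlim : Tendsto (f ∘ u) atTop (𝓝 L)) :
    Tendsto f (𝓝[>] x) (𝓝 L) := by
  convert hf.tendsto_nhdsGT x
  refine le_antisymm (le_sInf ?_) (_root_.ge_of_tendsto' hlim fun n => sInf_le ⟨u n, hu n, rfl⟩)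
  rintro _ ⟨y, hy, rfl⟩
  exact hL y hy

lemma UpperSemicontinuousAt.tendsto_biSup_ball {H α : Type*} [PseudoMetricSpace H]
    [CompleteLinearOrder α] [DenselyOrdered α] [TopologicalSpace α] [OrderTopology α]
    {f : H → α} {x : H} (hf : UpperSemicontinuousAt f x) :
    Tendsto (fun δ : ℝ => ⨆ y ∈ ball x δ, f y) (𝓝[>] 0) (𝓝 (f x)) := by
  refine tendsto_order.2 ⟨fun c hc => ?_, fun c hc => ?_⟩
  · filter_upwards [self_mem_nhdsWithin] with δ hδ
    exact hc.trans_le (le_biSup f (mem_ball_self hδ))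
  · obtain ⟨c', hxc', hc'c⟩ := exists_between hc
    obtain ⟨ε, hε, hball⟩ := Metric.eventually_nhds_iff_ball.1 (hf c' hxc')
    filter_upwards [Ioo_mem_nhdsGT hε] with δ hδ
    exact (iSup₂_le fun y hy => (hball y (ball_subset_ball hδ.2.le hy)).le).trans_lt hc'c

theorem ereal_integral_sup_shrinking_balls_general
    {E H : Type*} [MeasurableSpace E] [MetricSpace H]
    (P : Measure E)
    (η : H) (m : H → E → EReal)
    (hmeas : ∀ δ : ℝ, 0 < δ → Measurable (fun z => ⨆ η' ∈ Metric.ball η δ, m η' z))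
    (husc : ∀ᵐ z ∂P, UpperSemicontinuousAt (fun η' => m η' z) η)
    (δ₀ : ℝ) (hδ₀ : 0 < δ₀)
    (hint : erealIntegral P (fun z => ⨆ η' ∈ Metric.closedBall η δ₀, m η' z) < ⊤) :
    Tendsto (fun δ : ℝ => erealIntegral P (fun z => ⨆ η' ∈ Metric.ball η δ, m η' z))
      (nhdsWithin 0 (Set.Ioi 0)) (𝓝 (erealIntegral P (fun z => m η z))) := by
  set F : ℝ → E → EReal := fun δ z => ⨆ η' ∈ ball η δ, m η' z
  have hF_mono : Monotone F := fun _ _ h z => biSup_mono fun _ hy => ball_subset_ball h hy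
  obtain ⟨u, hu_anti, hu_mem, hu_lim⟩ := exists_seq_strictAnti_tendsto' hδ₀
  have hu_pos : ∀ n, 0 < u n := fun n => (hu_mem n).1
  have hu_nhdsGT : Tendsto u atTop (𝓝[>] 0) :=
    tendsto_nhdsWithin_iff.2 ⟨hu_lim, Eventually.of_forall hu_pos⟩
  have hF_le : F (u 0) ≤ fun z => ⨆ η' ∈ closedBall η δ₀, m η' z := fun z =>
    biSup_mono fun _ hy =>
      (ball_subset_closedBall.trans (closedBall_subset_closedBall (hu_mem 0).2.le)) hy
  refine (monotone_erealIntegral.comp hF_mono).tendsto_nhdsGT_of_tendsto_comp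
    (fun δ hδ => monotone_erealIntegral fun z => le_biSup (m · z) (mem_ball_self hδ)) hu_pos ?_
  refine tendsto_erealIntegral_of_antitone (fun n => hmeas _ (hu_pos n))
    (hF_mono.comp_antitone hu_anti.antitone) ?_ ((monotone_erealIntegral hF_le).trans_lt hint)
  filter_upwards [husc] with z hz
  exact hz.tendsto_biSup_ball.comp hu_nhdsGT

/-- Convergence of the integrals of suprema over shrinking balls
to the integral of `m η`, for a criterion function with values in `[-∞,∞)` that is
`P`-a.e. upper semicontinuous at `η`, provided the supremum over some closed ball
has integral `< ∞`. -/
theorem ereal_integral_sup_shrinking_balls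
    {E H : Type*} [MetricSpace E] [MeasurableSpace E] [BorelSpace E] [MetricSpace H]
    (P : Measure E) [IsProbabilityMeasure P]
    (η : H) (m : H → E → EReal)
    (hlt : ∀ η' z, m η' z < ⊤)
    (hmeas : ∀ δ : ℝ, 0 < δ → Measurable (fun z => ⨆ η' ∈ Metric.ball η δ, m η' z))
    (hmeasη : Measurable (fun z => m η z))
    (husc : ∀ᵐ z ∂P, UpperSemicontinuousAt (fun η' => m η' z) η)
    (δ₀ : ℝ) (hδ₀ : 0 < δ₀)
    (hint : erealIntegral P (fun z => ⨆ η' ∈ Metric.closedBall η δ₀, m η' z) < ⊤) :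
    Tendsto (fun δ : ℝ => erealIntegral P (fun z => ⨆ η' ∈ Metric.ball η δ, m η' z))
      (nhdsWithin 0 (Set.Ioi 0)) (𝓝 (erealIntegral P (fun z => m η z))) :=
  ereal_integral_sup_shrinking_balls_general P η m hmeas husc δ₀ hδ₀ hint
end

section
/- Let {M_{n,i}} be a rowwise independent triangular array where M_{n,i} = max_{t ∈ [r_n]} ξ_{n,i;t} with ξ_{n,i;1}, ..., ξ_{n,i;r_n} i.i.d. with cdf F_{x_{n,i}}, x_{n,i} ∈ X. Suppose there is a cdf F₀ with upper endpoint +∞ and c : X → (0, ∞) with inf_x c(x) > 0 such that sup_x |log F_x(y)/log F₀(y) − c(x)| → 0 as y → ∞. If log n = o(r_n), then min_{i ∈ [n]} M_{n,i} → ∞ almost surely as n → ∞. -/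
set_option maxHeartbeats 1000000


open MeasureTheory Filter Topology

/-- For block maxima `M_{n,i}` with `P(M_{n,i} ≤ y) = F_{x_{n,i}}(y)^{r_n}`,
under uniform tail comparability with a cdf `F₀` whose upper endpoint is `+∞`,
`inf_x c(x) > 0` and `log n = o(r_n)`, the minimum `min_{i ∈ [n]} M_{n,i} → ∞` a.s. -/
theorem min_block_maxima_tendsto_atTop
    {Ω X : Type*} [MeasurableSpace Ω] (P : Measure Ω) [IsProbabilityMeasure P]
    (r : ℕ → ℕ) (hrpos : ∀ n, 0 < r n)
    (x : ℕ → ℕ → X) (M : ℕ → ℕ → Ω → ℝ) (hMmeas : ∀ n i, Measurable (M n i))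
    (F₀ : ℝ → ℝ) (hF₀mono : Monotone F₀) (hF₀01 : ∀ y, 0 ≤ F₀ y ∧ F₀ y < 1)
    (hF₀top : Tendsto F₀ atTop (𝓝 1))
    (F : X → ℝ → ℝ) (hF01 : ∀ x' y, 0 ≤ F x' y ∧ F x' y ≤ 1)
    (c : X → ℝ) (ε₀ : ℝ) (hε₀ : 0 < ε₀) (hcinf : ∀ x', ε₀ ≤ c x')
    (hunif : ∀ ε : ℝ, 0 < ε → ∃ y₀ : ℝ, ∀ y, y₀ ≤ y → ∀ x',
      |Real.log (F x' y) / Real.log (F₀ y) - c x'| ≤ ε)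
    (hdist : ∀ n, ∀ i < n, ∀ y : ℝ,
      (P {ω | M n i ω ≤ y}).toReal = (F (x n i) y) ^ (r n))
    (hlogn : Tendsto (fun n : ℕ => Real.log n / (r n : ℝ)) atTop (𝓝 0)) :
    ∀ᵐ ω ∂P, ∀ y : ℝ, ∀ᶠ n in atTop, ∀ i < n, y < M n i ω := by
  -- Per-level key lemma
  have key : ∀ y : ℝ, ∀ᵐ ω ∂P, ∀ᶠ n in atTop, ∀ i < n, y < M n i ω := by
    intro y
    -- choose y₂ with F₀ ≥ 1/2 beyond y₂
    obtain ⟨y₂, hy₂⟩ : ∃ y₂ : ℝ, ∀ z, y₂ ≤ z → (1:ℝ)/2 ≤ F₀ z := by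
      have h := hF₀top.eventually (eventually_ge_nhds (by norm_num : (1:ℝ)/2 < 1))
      obtain ⟨y₂, hy₂⟩ := eventually_atTop.mp h
      exact ⟨y₂, hy₂⟩
    obtain ⟨y₀, hy₀⟩ := hunif (ε₀/2) (by positivity)
    set Y := max y (max y₀ y₂) with hY
    have hyY : y ≤ Y := le_max_left _ _
    have hY₀ : y₀ ≤ Y := le_trans (le_max_left _ _) (le_max_right _ _)
    have hY₂ : y₂ ≤ Y := le_trans (le_max_right _ _) (le_max_right _ _)
    have hF₀Y : (1:ℝ)/2 ≤ F₀ Y := hy₂ Y hY₂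
    have hL : Real.log (F₀ Y) < 0 := Real.log_neg (by linarith) (hF₀01 Y).2
    set L := Real.log (F₀ Y) with hLdef
    set p := Real.exp (ε₀/2 * L) with hpdef
    have hp1 : p < 1 := by
      rw [hpdef, Real.exp_lt_one_iff]
      exact mul_neg_of_pos_of_neg (by positivity) hL
    have hFle : ∀ x', F x' Y ≤ p := by
      intro x'
      rcases eq_or_lt_of_le (hF01 x' Y).1 with h0 | h0
      · rw [← h0]; exact (Real.exp_pos _).le
      · have hr := hy₀ Y hY₀ x'
        have hratio : ε₀/2 ≤ Real.log (F x' Y) / L := by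
          have h1 := (abs_le.mp hr).1
          have h2 := hcinf x'
          linarith
        have hlog : Real.log (F x' Y) ≤ ε₀/2 * L := by
          have := mul_le_mul_of_nonpos_right hratio hL.le
          rwa [div_mul_cancel₀ _ hL.ne] at this
        calc F x' Y = Real.exp (Real.log (F x' Y)) := (Real.exp_log h0).symm
        _ ≤ p := Real.exp_le_exp.mpr hlog
    set a := -(ε₀/2 * L) with hadef
    have ha : 0 < a := by
      have h := mul_neg_of_pos_of_neg (by positivity : (0:ℝ) < ε₀/2) hL
      rw [hadef]; linarith
    -- summability of n * p^(r n)
    set f : ℕ → ℝ := fun n => (n : ℝ) * p ^ (r n) with hfdef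
    obtain ⟨N₁, hN₁⟩ := eventually_atTop.mp
      (hlogn.eventually (eventually_le_nhds (by positivity : (0:ℝ) < a/3)))
    set N := max N₁ 1 with hNdef
    have hbound : ∀ n, N ≤ n → f n ≤ (n : ℝ) ^ (-2 : ℝ) := by
      intro n hn
      have hn1 : 1 ≤ n := le_trans (le_max_right _ _) hn
      have hnpos : (0:ℝ) < n := by exact_mod_cast hn1
      have hlogge : 0 ≤ Real.log n := Real.log_nonneg (by exact_mod_cast hn1)
      have hln : Real.log n / (r n : ℝ) ≤ a/3 := hN₁ n (le_trans (le_max_left _ _) hn)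
      have hrn : (0:ℝ) < (r n : ℝ) := by exact_mod_cast hrpos n
      have hln' : Real.log n ≤ a/3 * (r n : ℝ) := by
        rw [div_le_iff₀ hrn] at hln; linarith
      have hpn : p ^ (r n) = Real.exp ((r n : ℝ) * (ε₀/2 * L)) := by
        rw [hpdef, Real.exp_nat_mul]
      have h1 : f n = Real.exp (Real.log n + (r n : ℝ) * (ε₀/2 * L)) := by
        rw [hfdef, Real.exp_add, ← hpn, Real.exp_log hnpos]
      have h2 : (n:ℝ) ^ (-2:ℝ) = Real.exp (Real.log n * (-2)) := by
        rw [Real.rpow_def_of_pos hnpos]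
      rw [h1, h2]
      apply Real.exp_le_exp.mpr
      have : (r n : ℝ) * (ε₀/2 * L) = -(a * (r n : ℝ)) := by rw [hadef]; ring
      rw [this]
      have h3 : a/3 * (r n : ℝ) * 3 = a * (r n : ℝ) := by ring
      clear_value Y L p a f N
      linarith
    have hfnonneg : ∀ n, 0 ≤ f n := by
      intro n
      have hp0 : (0:ℝ) < p := Real.exp_pos _
      positivity
    have hs2 : Summable (fun n : ℕ => (n : ℝ) ^ (-2 : ℝ)) :=
      Real.summable_nat_rpow.mpr (by norm_num)
    have hs3 : Summable (fun m : ℕ => ((m + N : ℕ) : ℝ) ^ (-2 : ℝ)) :=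
      (summable_nat_add_iff N).mpr hs2
    have hsum : Summable f := by
      rw [← summable_nat_add_iff N]
      exact Summable.of_nonneg_of_le (fun m => hfnonneg _)
        (fun m => hbound (m + N) (Nat.le_add_left _ _)) hs3
    -- Borel–Cantelli
    set s : ℕ → Set Ω := fun n => ⋃ i ∈ Finset.range n, {ω | M n i ω ≤ Y} with hsdef
    have hμ : ∀ n, P (s n) ≤ ENNReal.ofReal (f n) := by
      intro n
      calc P (s n) ≤ ∑ i ∈ Finset.range n, P {ω | M n i ω ≤ Y} :=
            measure_biUnion_finset_le _ _
        _ ≤ ∑ i ∈ Finset.range n, ENNReal.ofReal (p ^ (r n)) := by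
            apply Finset.sum_le_sum
            intro i hi
            have hi' := Finset.mem_range.mp hi
            have hne : P {ω | M n i ω ≤ Y} ≠ ⊤ := measure_ne_top P _
            rw [← ENNReal.ofReal_toReal hne, hdist n i hi' Y]
            exact ENNReal.ofReal_le_ofReal
              (pow_le_pow_left₀ (hF01 (x n i) Y).1 (hFle (x n i)) _)
        _ = ENNReal.ofReal (f n) := by
            rw [Finset.sum_const, Finset.card_range, nsmul_eq_mul, hfdef]
            rw [ENNReal.ofReal_mul (by positivity), ENNReal.ofReal_natCast]
    have htsum : (∑' n, P (s n)) ≠ ⊤ := by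
      apply ne_top_of_le_ne_top _ (ENNReal.tsum_le_tsum hμ)
      rw [← ENNReal.ofReal_tsum_of_nonneg hfnonneg hsum]
      exact ENNReal.ofReal_ne_top
    filter_upwards [ae_eventually_notMem htsum] with ω hω
    filter_upwards [hω] with n hn i hi
    by_contra hcon
    push_neg at hcon
    exact hn (Set.mem_biUnion (Finset.mem_range.mpr hi) (le_trans hcon hyY))
  have key2 : ∀ᵐ ω ∂P, ∀ k : ℕ, ∀ᶠ n in atTop, ∀ i < n, (k : ℝ) < M n i ω :=
    ae_all_iff.mpr fun k => key (k : ℝ)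
  filter_upwards [key2] with ω hω y
  filter_upwards [hω ⌈y⌉₊] with n hn i hi
  exact lt_of_le_of_lt (Nat.le_ceil y) (hn i hi)
end

section
/- Consider the generalized extreme value density p_{μ,σ,ξ}(y) = (1/σ)(1 + ξ(y−μ)/σ)^{−1−1/ξ} exp(−(1 + ξ(y−μ)/σ)^{−1/ξ}) for ξ ≠ 0 on {y : 1 + ξ(y−μ)/σ > 0}, p_{μ,σ,0}(y) = (1/σ) e^{−(y−μ)/σ} exp(−e^{−(y−μ)/σ}), and p_{μ,σ,ξ}(y) = 0 otherwise. Then the map (μ, σ, ξ, y) ↦ p_{μ,σ,ξ}(y) is continuous on ℝ × (0, ∞) × (−1, ∞) × ℝ. -/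
/-!
Write `z = (y - μ) / σ` and `t = 1 + ξ z`; the density is `σ⁻¹` times the standard one at `(ξ, z)`.
Where `t > 0` the standard density is `u ^ (1 + ξ) * exp (-u)` with `u = t ^ (-1 / ξ)`, i.e.
`u = exp (-z * L (ξ z))` for `L x = log (1 + x) / x`, which extends continuously through `x = 0`
and gives the Gumbel case `u = exp (-z)` at `ξ = 0`. Where `t < 0` the density vanishes near the
point. At the boundary `t = 0` either `ξ < 0` and `u → 0`, so that `u ^ (1 + ξ) → 0` because
`1 + ξ > 0`, or `ξ > 0` and `u → ∞`, where `exp (-u)` beats `u ^ (1 + ξ)` locally uniformly in `ξ`.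
-/

/-- The generalized extreme value (GEV) density with location `μ`, scale `σ`, shape `ξ`. -/
noncomputable def gevDensity (μ σ ξ y : ℝ) : ℝ :=
  if ξ = 0 then
    σ⁻¹ * Real.exp (-((y - μ) / σ)) * Real.exp (-Real.exp (-((y - μ) / σ)))
  else if 0 < 1 + ξ * ((y - μ) / σ) then
    σ⁻¹ * (1 + ξ * ((y - μ) / σ)) ^ (-1 - 1 / ξ)
      * Real.exp (-((1 + ξ * ((y - μ) / σ)) ^ (-1 / ξ)))
  else 0

open Real Filter Topology

lemma hasDerivAt_log_one_add_zero : HasDerivAt (fun x : ℝ => log (1 + x)) 1 0 := by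
  simpa using ((hasDerivAt_id (0 : ℝ)).const_add 1).log (by norm_num)

lemma dslope_log_one_add_zero : dslope (fun x : ℝ => log (1 + x)) 0 0 = 1 := by
  rw [dslope_same, hasDerivAt_log_one_add_zero.deriv]

lemma continuousAt_dslope_log_one_add {x : ℝ} (hx : -1 < x) :
    ContinuousAt (dslope (fun x : ℝ => log (1 + x)) 0) x := by
  rcases eq_or_ne x 0 with rfl | hx0
  · exact continuousAt_dslope_same.2 hasDerivAt_log_one_add_zero.differentiableAt
  · exact (continuousAt_dslope_of_ne hx0).2
      ((continuousAt_log (by linarith)).comp (by fun_prop))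

/-- `log (1 + ξ * z) / ξ`, extended by `z` at `ξ = 0`; writing it through `dslope` makes joint
continuity at `ξ = 0` the differentiability of `log (1 + x)` at `0`. -/
noncomputable def logOneAddMulDiv (ξ z : ℝ) : ℝ :=
  z * dslope (fun x : ℝ => log (1 + x)) 0 (ξ * z)

lemma logOneAddMulDiv_zero_left (z : ℝ) : logOneAddMulDiv 0 z = z := by
  rw [logOneAddMulDiv, zero_mul, dslope_log_one_add_zero, mul_one]

lemma logOneAddMulDiv_of_ne_zero {ξ : ℝ} (hξ : ξ ≠ 0) (z : ℝ) :
    logOneAddMulDiv ξ z = log (1 + ξ * z) / ξ := by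
  rcases eq_or_ne z 0 with rfl | hz
  · simp [logOneAddMulDiv]
  · rw [logOneAddMulDiv, dslope_of_ne _ (mul_ne_zero hξ hz), slope_def_field]
    simp only [add_zero, log_one, sub_zero]
    field_simp

lemma continuousAt_logOneAddMulDiv {p : ℝ × ℝ} (hp : 0 < 1 + p.1 * p.2) :
    ContinuousAt (fun q : ℝ × ℝ => logOneAddMulDiv q.1 q.2) p :=
  continuousAt_snd.mul <| (continuousAt_dslope_log_one_add (by linarith)).comp
    (continuousAt_fst.mul continuousAt_snd)

section LogOneAddMulDivLimits

variable {α : Type*} {l : Filter α} {ξ z : α → ℝ} {ξ₀ : ℝ}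

lemma logOneAddMulDiv_eventuallyEq (hξ : Tendsto ξ l (𝓝 ξ₀)) (hξ₀ : ξ₀ ≠ 0) :
    (fun x => logOneAddMulDiv (ξ x) (z x)) =ᶠ[l] fun x => log (1 + ξ x * z x) * (ξ x)⁻¹ := by
  filter_upwards [hξ.eventually_ne hξ₀] with x hx
  rw [logOneAddMulDiv_of_ne_zero hx, div_eq_mul_inv]

lemma tendsto_logOneAddMulDiv_atTop (hξ : Tendsto ξ l (𝓝 ξ₀)) (hξ₀ : ξ₀ < 0)
    (ht : Tendsto (fun x => 1 + ξ x * z x) l (𝓝[>] 0)) :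
    Tendsto (fun x => logOneAddMulDiv (ξ x) (z x)) l atTop :=
  ((tendsto_log_nhdsGT_zero.comp ht).atBot_mul_neg (inv_lt_zero.2 hξ₀) (hξ.inv₀ hξ₀.ne)).congr'
    (logOneAddMulDiv_eventuallyEq hξ hξ₀.ne).symm

lemma tendsto_logOneAddMulDiv_atBot (hξ : Tendsto ξ l (𝓝 ξ₀)) (hξ₀ : 0 < ξ₀)
    (ht : Tendsto (fun x => 1 + ξ x * z x) l (𝓝[>] 0)) :
    Tendsto (fun x => logOneAddMulDiv (ξ x) (z x)) l atBot :=
  ((tendsto_log_nhdsGT_zero.comp ht).atBot_mul_pos (inv_pos.2 hξ₀) (hξ.inv₀ hξ₀.ne')).congr'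
    (logOneAddMulDiv_eventuallyEq hξ hξ₀.ne').symm

end LogOneAddMulDivLimits

lemma continuousAt_rpow_mul_exp_neg {p : ℝ × ℝ} (hp : p.2 ≠ 0 ∨ 0 < p.1) :
    ContinuousAt (fun p : ℝ × ℝ => p.2 ^ p.1 * exp (-p.2)) p :=
  ((continuousAt_rpow p.swap hp).comp continuous_swap.continuousAt).mul (by fun_prop)

lemma tendsto_rpow_mul_exp_neg_nhds_prod_atTop (a₀ : ℝ) :
    Tendsto (fun p : ℝ × ℝ => p.2 ^ p.1 * exp (-p.2)) (𝓝 a₀ ×ˢ atTop) (𝓝 0) := by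
  have hbound := (tendsto_rpow_mul_exp_neg_mul_atTop_nhds_zero (a₀ + 1) 1 one_pos).comp
    (tendsto_snd (f := 𝓝 a₀))
  refine squeeze_zero' ?_ ?_ hbound
  · filter_upwards [tendsto_snd.eventually (eventually_ge_atTop 0)] with p hp
    positivity
  · filter_upwards [tendsto_fst.eventually (eventually_lt_nhds (lt_add_one a₀)),
      tendsto_snd.eventually (eventually_ge_atTop 1)] with p ha hu
    rw [Function.comp_apply, neg_one_mul]
    exact mul_le_mul_of_nonneg_right (rpow_le_rpow_of_exponent_le hu ha.le) (exp_pos _).le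

lemma gevDensity_eq_inv_mul_zero_one (μ σ ξ y : ℝ) :
    gevDensity μ σ ξ y = σ⁻¹ * gevDensity 0 1 ξ ((y - μ) / σ) := by
  unfold gevDensity
  simp only [sub_zero, div_one, inv_one, one_mul]
  split_ifs <;> ring

lemma gevDensity_zero_one_of_pos {ξ z : ℝ} (h : 0 < 1 + ξ * z) :
    gevDensity 0 1 ξ z =
      exp (-logOneAddMulDiv ξ z) ^ (1 + ξ) * exp (-exp (-logOneAddMulDiv ξ z)) := by
  rcases eq_or_ne ξ 0 with rfl | hξ
  · simp [gevDensity, logOneAddMulDiv_zero_left]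
  · have hu : exp (-logOneAddMulDiv ξ z) = (1 + ξ * z) ^ (-1 / ξ) := by
      rw [logOneAddMulDiv_of_ne_zero hξ, rpow_def_of_pos h]
      ring_nf
    have hpow : (1 + ξ * z) ^ (-1 - 1 / ξ) = ((1 + ξ * z) ^ (-1 / ξ)) ^ (1 + ξ) := by
      rw [← rpow_mul h.le]
      congr 1
      field_simp
      ring
    simp only [gevDensity, hξ, if_false, sub_zero, div_one, h, if_true, inv_one, one_mul, hu, hpow]

lemma gevDensity_zero_one_of_nonpos {ξ z : ℝ} (hξ : ξ ≠ 0) (h : 1 + ξ * z ≤ 0) :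
    gevDensity 0 1 ξ z = 0 := by
  simp [gevDensity, hξ, not_lt.2 h]

lemma gevDensity_zero_one_eventuallyEq_zero {p : ℝ × ℝ} (hp : p.1 ≠ 0) :
    (fun q : ℝ × ℝ => gevDensity 0 1 q.1 q.2) =ᶠ[𝓝[{q | 1 + q.1 * q.2 ≤ 0}] p] 0 := by
  filter_upwards [continuousAt_fst.eventually_ne hp |>.filter_mono nhdsWithin_le_nhds,
    self_mem_nhdsWithin] with q hq hq'
  exact gevDensity_zero_one_of_nonpos hq hq'

lemma continuousAt_gevDensity_zero_one_of_pos {p : ℝ × ℝ} (hp : 0 < 1 + p.1 * p.2) :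
    ContinuousAt (fun q : ℝ × ℝ => gevDensity 0 1 q.1 q.2) p := by
  have hW := continuousAt_logOneAddMulDiv hp
  have hK := (continuousAt_rpow_mul_exp_neg (p := (1 + p.1, exp (-logOneAddMulDiv p.1 p.2)))
    (Or.inl (exp_pos _).ne')).comp (x := p)
    ((continuousAt_const.add continuousAt_fst).prodMk hW.neg.rexp)
  refine hK.congr ?_
  filter_upwards [(isOpen_lt continuous_const
    (by fun_prop : Continuous fun q : ℝ × ℝ => 1 + q.1 * q.2)).mem_nhds hp] with q hq
  exact (gevDensity_zero_one_of_pos hq).symm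

lemma continuousAt_gevDensity_zero_one_of_neg {p : ℝ × ℝ} (hp : 1 + p.1 * p.2 < 0) :
    ContinuousAt (fun q : ℝ × ℝ => gevDensity 0 1 q.1 q.2) p := by
  have hξ : p.1 ≠ 0 := by rintro h; simp [h] at hp; linarith
  have hT : {q : ℝ × ℝ | 1 + q.1 * q.2 ≤ 0} ∈ 𝓝 p :=
    mem_of_superset ((isOpen_lt (by fun_prop : Continuous fun q : ℝ × ℝ => 1 + q.1 * q.2)
      continuous_const).mem_nhds hp) (Set.ofPred_subset_ofPred.2 fun _ => le_of_lt)
  have h0 := gevDensity_zero_one_eventuallyEq_zero hξ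
  rw [nhdsWithin_eq_nhds.2 hT] at h0
  exact continuousAt_const.congr h0.symm

lemma tendsto_gevDensity_zero_one_nhdsWithin_pos {p : ℝ × ℝ} (hξ : -1 < p.1)
    (hp : 1 + p.1 * p.2 = 0) :
    Tendsto (fun q : ℝ × ℝ => gevDensity 0 1 q.1 q.2) (𝓝[{q | 0 < 1 + q.1 * q.2}] p) (𝓝 0) := by
  have hξ0 : p.1 ≠ 0 := by rintro h; simp [h] at hp
  have hξ' : Tendsto (fun q : ℝ × ℝ => q.1) (𝓝[{q | 0 < 1 + q.1 * q.2}] p) (𝓝 p.1) :=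
    continuousAt_fst.tendsto.mono_left nhdsWithin_le_nhds
  have hcont : Continuous fun q : ℝ × ℝ => 1 + q.1 * q.2 := by fun_prop
  have ht : Tendsto (fun q : ℝ × ℝ => 1 + q.1 * q.2) (𝓝[{q | 0 < 1 + q.1 * q.2}] p) (𝓝[>] 0) :=
    tendsto_nhdsWithin_iff.2 ⟨hp ▸ hcont.continuousWithinAt, self_mem_nhdsWithin⟩
  have ha := tendsto_const_nhds (x := (1 : ℝ)) |>.add hξ'
  refine Tendsto.congr' (eventuallyEq_of_mem self_mem_nhdsWithin
    fun q hq => (gevDensity_zero_one_of_pos hq).symm) ?_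
  rcases hξ0.lt_or_gt with hneg | hpos
  · have hu := tendsto_exp_neg_atTop_nhds_zero.comp (tendsto_logOneAddMulDiv_atTop hξ' hneg ht)
    have hK := continuousAt_rpow_mul_exp_neg (p := (1 + p.1, 0)) (Or.inr (by simp; linarith))
    simpa [Function.comp_def, zero_rpow (by linarith : 1 + p.1 ≠ 0)] using
      hK.tendsto.comp (ha.prodMk_nhds hu)
  · have hu := tendsto_exp_atTop.comp
      (tendsto_neg_atBot_atTop.comp (tendsto_logOneAddMulDiv_atBot hξ' hpos ht))
    exact (tendsto_rpow_mul_exp_neg_nhds_prod_atTop _).comp (ha.prodMk hu)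

lemma continuousAt_gevDensity_zero_one_of_eq_zero {p : ℝ × ℝ} (hξ : -1 < p.1)
    (hp : 1 + p.1 * p.2 = 0) :
    ContinuousAt (fun q : ℝ × ℝ => gevDensity 0 1 q.1 q.2) p := by
  have hξ0 : p.1 ≠ 0 := by rintro h; simp [h] at hp
  have hcompl : {q : ℝ × ℝ | 0 < 1 + q.1 * q.2}ᶜ = {q | 1 + q.1 * q.2 ≤ 0} := by
    ext; simp
  rw [ContinuousAt, gevDensity_zero_one_of_nonpos hξ0 hp.le, ← nhdsWithin_univ,
    ← Set.union_compl_self {q : ℝ × ℝ | 0 < 1 + q.1 * q.2}, nhdsWithin_union, hcompl,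
    tendsto_sup]
  exact ⟨tendsto_gevDensity_zero_one_nhdsWithin_pos hξ hp,
    tendsto_const_nhds.congr' (gevDensity_zero_one_eventuallyEq_zero hξ0).symm⟩

lemma continuousAt_gevDensity_zero_one {p : ℝ × ℝ} (hξ : -1 < p.1) :
    ContinuousAt (fun q : ℝ × ℝ => gevDensity 0 1 q.1 q.2) p := by
  rcases lt_trichotomy (1 + p.1 * p.2) 0 with hp | hp | hp
  · exact continuousAt_gevDensity_zero_one_of_neg hp
  · exact continuousAt_gevDensity_zero_one_of_eq_zero hξ hp
  · exact continuousAt_gevDensity_zero_one_of_pos hp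

/-- The GEV density is jointly continuous in `(μ, σ, ξ, y)` on
`ℝ × (0, ∞) × (−1, ∞) × ℝ`. -/
theorem gevDensity_continuousOn :
    ContinuousOn (fun q : ℝ × ℝ × ℝ × ℝ => gevDensity q.1 q.2.1 q.2.2.1 q.2.2.2)
      {q : ℝ × ℝ × ℝ × ℝ | 0 < q.2.1 ∧ -1 < q.2.2.1} := by
  rintro q ⟨hσ, hξ⟩
  have hz : ContinuousAt (fun q : ℝ × ℝ × ℝ × ℝ => (q.2.2.1, (q.2.2.2 - q.1) / q.2.1)) q := by
    fun_prop (disch := exact hσ.ne')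
  refine ContinuousAt.continuousWithinAt <| ContinuousAt.congr ?_
    (Eventually.of_forall fun q => (gevDensity_eq_inv_mul_zero_one _ _ _ _).symm)
  have hstd : ContinuousAt (fun p : ℝ × ℝ => gevDensity 0 1 p.1 p.2)
      (q.2.2.1, (q.2.2.2 - q.1) / q.2.1) :=
    continuousAt_gevDensity_zero_one hξ
  exact (continuousAt_snd.fst.inv₀ hσ.ne').mul (hstd.comp (x := q) hz :)
end
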